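/- arXiv:0812.5027 — 2 statements merged into one kernel-verified Lean document; each statement's English description precedes it below -/
import Mathlib

section
/- Every linear operator Q on F[x] that lowers the degree of each polynomial by exactly one is of the form Qxⁿ = Σ_{k=1}^n b_{n,k} x^{n−k} with b_{n,1} ≠ 0; normalizing b_{1,1} = 1, there exist a (unique) admissible sequence ψ and (unique) scalars q_k, k ≥ 2, with Q = ∂_ψ + Σ_{k≥2} q_k ∂_ψ^k if and only if b_{n,k} = (n choose k)_ψ · b_{k,k} for all n ≥ k ≥ 1, where (n choose k)_ψ = n_ψ(n−1)_ψ⋯(n−k+1)_ψ / k_ψ!. -/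
/-! Comparing coefficients of `x^(n-k)` in `Q xⁿ = Σ_k q_k ∂_ψᵏ xⁿ = Σ_k q_k n_ψ ⋯ (n-k+1)_ψ x^(n-k)`
shows that a representation `b n k = q_k · n_ψ ⋯ (n-k+1)_ψ` with `q₁ = 1` is forced:
`k = 1` gives `n_ψ = b n 1`, and then `n = k` gives `q_k = b k k / k_ψ!`. Substituting both back,
such a representation exists exactly when `b n k = (n choose k)_ψ · b k k`. -/

open Polynomial Finset

theorem Polynomial.coeff_sum_Icc_smul_X_pow_sub {R : Type*} [Semiring R] (c : ℕ → R)
    {n k : ℕ} (hk : 1 ≤ k) (hkn : k ≤ n) :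
    (∑ i ∈ Icc 1 n, c i • (X : R[X]) ^ (n - i)).coeff (n - k) = c k := by
  simp only [finsetSum_coeff, coeff_smul, coeff_X_pow, smul_eq_mul]
  rw [sum_eq_single_of_mem k (mem_Icc.mpr ⟨hk, hkn⟩) fun i hi hik => by
    rw [if_neg (by simp only [mem_Icc] at hi; omega), mul_zero]]
  simp

theorem Polynomial.sum_Icc_smul_X_pow_sub_eq_iff {R : Type*} [Semiring R] (c d : ℕ → R)
    (n : ℕ) :
    ∑ i ∈ Icc 1 n, c i • (X : R[X]) ^ (n - i) = ∑ i ∈ Icc 1 n, d i • (X : R[X]) ^ (n - i) ↔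
      ∀ k, 1 ≤ k → k ≤ n → c k = d k := by
  refine ⟨fun h k hk hkn => ?_, fun h => sum_congr rfl fun k hk => ?_⟩
  · simpa only [coeff_sum_Icc_smul_X_pow_sub _ hk hkn] using congrArg (coeff · (n - k)) h
  · obtain ⟨hk, hkn⟩ := mem_Icc.mp hk
    rw [h k hk hkn]

theorem Finset.prod_range_sub_eq_prod_Icc {M : Type*} [CommMonoid M] (f : ℕ → M) (k : ℕ) :
    ∏ j ∈ range k, f (k - j) = ∏ j ∈ Icc 1 k, f j := by
  induction k with
  | zero => rfl
  | succ k ih =>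
    rw [prod_range_succ', prod_Icc_succ_top (Nat.le_add_left 1 k), ← ih]
    simp only [Nat.add_sub_add_right, Nat.sub_zero]

section PsiExpansion

variable {F : Type*} [Field F] {b : ℕ → ℕ → F} {ν q : ℕ → F}

/-- `b n k` is the coefficient of `x^(n-k)` in `(Σ_k q k ∂_ψᵏ) xⁿ`, where `ν n = n_ψ`. -/
def IsPsiExpansion (b : ℕ → ℕ → F) (ν q : ℕ → F) : Prop :=
  ∀ n k, 1 ≤ k → k ≤ n → b n k = q k * ∏ j ∈ range k, ν (n - j)

/-- `n_ψ := b n 1`; `b` never sees `0_ψ`, which is normalised to `0`. -/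
def nPsiOf (b : ℕ → ℕ → F) (n : ℕ) : F := if n = 0 then 0 else b n 1

def qOf (b : ℕ → ℕ → F) (k : ℕ) : F := if k = 0 then 0 else b k k / ∏ j ∈ Icc 1 k, b j 1

theorem prod_Icc_coeff_one_ne_zero (hb1 : ∀ n ≥ 1, b n 1 ≠ 0) (k : ℕ) :
    ∏ j ∈ Icc 1 k, b j 1 ≠ 0 :=
  prod_ne_zero_iff.mpr fun j hj => hb1 j (mem_Icc.mp hj).1

theorem prod_range_nPsiOf {n k : ℕ} (hkn : k ≤ n) :
    ∏ j ∈ range k, nPsiOf b (n - j) = ∏ j ∈ range k, b (n - j) 1 :=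
  prod_congr rfl fun j hj => if_neg (by simp only [mem_range] at hj; omega)

namespace IsPsiExpansion

theorem eq_coeff_one (h : IsPsiExpansion b ν q) (hq1 : q 1 = 1) {n : ℕ} (hn : 1 ≤ n) :
    ν n = b n 1 := by
  simpa [hq1] using (h n 1 le_rfl hn).symm

theorem prod_range_eq (h : IsPsiExpansion b ν q) (hq1 : q 1 = 1) {n k : ℕ} (hkn : k ≤ n) :
    ∏ j ∈ range k, ν (n - j) = ∏ j ∈ range k, b (n - j) 1 :=
  prod_congr rfl fun j hj => h.eq_coeff_one hq1 (by simp only [mem_range] at hj; omega)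

theorem eq_qOf (h : IsPsiExpansion b ν q) (hq1 : q 1 = 1) (hb1 : ∀ n ≥ 1, b n 1 ≠ 0)
    {k : ℕ} (hk : 1 ≤ k) : q k = qOf b k := by
  have hkk := h k k hk le_rfl
  rw [h.prod_range_eq hq1 le_rfl, prod_range_sub_eq_prod_Icc (b · 1)] at hkk
  rw [qOf, if_neg (by omega), hkk, mul_div_cancel_right₀ _ (prod_Icc_coeff_one_ne_zero hb1 k)]

theorem coeff_eq_psiBinomial (h : IsPsiExpansion b ν q) (hq1 : q 1 = 1)
    (hb1 : ∀ n ≥ 1, b n 1 ≠ 0) {n k : ℕ} (hk : 1 ≤ k) (hkn : k ≤ n) :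
    b n k = (∏ j ∈ range k, b (n - j) 1) / (∏ j ∈ Icc 1 k, b j 1) * b k k := by
  rw [h n k hk hkn, h.eq_qOf hq1 hb1 hk, h.prod_range_eq hq1 hkn, qOf, if_neg (by omega)]
  field_simp [prod_Icc_coeff_one_ne_zero hb1 k]

theorem eq_nPsiOf_qOf (h : IsPsiExpansion b ν q) (hν0 : ν 0 = 0) (hq0 : q 0 = 0)
    (hq1 : q 1 = 1) (hb1 : ∀ n ≥ 1, b n 1 ≠ 0) : (ν, q) = (nPsiOf b, qOf b) := by
  refine Prod.ext (funext fun n => ?_) (funext fun n => ?_) <;> dsimp only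
  · rcases Nat.eq_zero_or_pos n with rfl | hn
    · simp [nPsiOf, hν0]
    · rw [h.eq_coeff_one hq1 hn, nPsiOf, if_neg hn.ne']
  · rcases Nat.eq_zero_or_pos n with rfl | hn
    · simp [qOf, hq0]
    · exact h.eq_qOf hq1 hb1 hn

end IsPsiExpansion

theorem isPsiExpansion_nPsiOf_qOf
    (hbin : ∀ n k : ℕ, 1 ≤ k → k ≤ n →
      b n k = (∏ j ∈ range k, b (n - j) 1) / (∏ j ∈ Icc 1 k, b j 1) * b k k) :
    IsPsiExpansion b (nPsiOf b) (qOf b) := by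
  intro n k hk hkn
  rw [prod_range_nPsiOf hkn, qOf, if_neg (by omega), hbin n k hk hkn]
  ring

end PsiExpansion

theorem observation_2_1_general {F : Type*} [Field F]
    (Q : Module.End F (Polynomial F))
    (b : ℕ → ℕ → F)
    (hb : ∀ n : ℕ, Q (X ^ n) = ∑ k ∈ Finset.Icc 1 n, b n k • X ^ (n - k))
    (hb1 : ∀ n ≥ 1, b n 1 ≠ 0) (hnorm : b 1 1 = 1) :
    (∃ b' : ℕ → ℕ → F,
        (∀ n : ℕ, Q (X ^ n) = ∑ k ∈ Finset.Icc 1 n, b' n k • X ^ (n - k)) ∧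
        ∀ n ≥ 1, b' n 1 ≠ 0) ∧
    ((∃! nq : (ℕ → F) × (ℕ → F),
        nq.1 0 = 0 ∧ (∀ n ≥ 1, nq.1 n ≠ 0) ∧ nq.2 0 = 0 ∧ nq.2 1 = 1 ∧
        ∀ n : ℕ, Q (X ^ n) =
          ∑ k ∈ Finset.Icc 1 n,
            (nq.2 k * ∏ j ∈ Finset.range k, nq.1 (n - j)) • X ^ (n - k)) ↔
      (∀ n k : ℕ, 1 ≤ k → k ≤ n →
        b n k = (∏ j ∈ Finset.range k, b (n - j) 1) /
            (∏ j ∈ Finset.Icc 1 k, b j 1) * b k k)) := by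
  have expansion_iff : ∀ ν q : ℕ → F, (∀ n : ℕ, Q (X ^ n) =
      ∑ k ∈ Icc 1 n, (q k * ∏ j ∈ range k, ν (n - j)) • X ^ (n - k)) ↔
        IsPsiExpansion b ν q := fun ν q => by
    simp only [hb, sum_Icc_smul_X_pow_sub_eq_iff, IsPsiExpansion]
  refine ⟨⟨b, hb, hb1⟩, ⟨?_, fun hbin => ?_⟩⟩
  · rintro ⟨⟨ν, q⟩, ⟨-, -, -, hq1, hQ⟩, -⟩
    exact fun n k hk hkn => ((expansion_iff ν q).1 hQ).coeff_eq_psiBinomial hq1 hb1 hk hkn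
  · refine ⟨(nPsiOf b, qOf b), ⟨rfl, fun n hn => ?_, rfl, ?_, ?_⟩, ?_⟩
    · simpa [nPsiOf, Nat.one_le_iff_ne_zero.mp hn] using hb1 n hn
    · simp [qOf, hnorm]
    · exact (expansion_iff _ _).2 (isPsiExpansion_nPsiOf_qOf hbin)
    · rintro ⟨ν, q⟩ ⟨hν0, -, hq0, hq1, hQ⟩
      exact ((expansion_iff ν q).1 hQ).eq_nPsiOf_qOf hν0 hq0 hq1 hb1

/-- every degree-lowering-by-one operator Q has the form
Qxⁿ = Σ_{k=1}^n b_{n,k} x^{n−k} with b_{n,1} ≠ 0; and (with b₁,₁ = 1) there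
exist a unique admissible sequence (given by n_ψ, with n_ψ = b_{n,1}) and
unique coefficients q_k (q₁ = 1) with Q = ∂_ψ + Σ_{k≥2} q_k ∂_ψᵏ iff
b_{n,k} = (n choose k)_ψ b_{k,k}. -/
theorem observation_2_1 {F : Type*} [Field F] [CharZero F]
    (Q : Module.End F (Polynomial F))
    (hQdeg : (∀ p : Polynomial F, 1 ≤ p.natDegree →
        Q p ≠ 0 ∧ (Q p).natDegree = p.natDegree - 1) ∧
      ∀ p : Polynomial F, p.natDegree = 0 → Q p = 0)
    (b : ℕ → ℕ → F)
    (hb : ∀ n : ℕ, Q (X ^ n) = ∑ k ∈ Finset.Icc 1 n, b n k • X ^ (n - k))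
    (hb1 : ∀ n ≥ 1, b n 1 ≠ 0) (hnorm : b 1 1 = 1) :
    (∃ b' : ℕ → ℕ → F,
        (∀ n : ℕ, Q (X ^ n) = ∑ k ∈ Finset.Icc 1 n, b' n k • X ^ (n - k)) ∧
        ∀ n ≥ 1, b' n 1 ≠ 0) ∧
    ((∃! nq : (ℕ → F) × (ℕ → F),
        nq.1 0 = 0 ∧ (∀ n ≥ 1, nq.1 n ≠ 0) ∧ nq.2 0 = 0 ∧ nq.2 1 = 1 ∧
        ∀ n : ℕ, Q (X ^ n) =
          ∑ k ∈ Finset.Icc 1 n,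
            (nq.2 k * ∏ j ∈ Finset.range k, nq.1 (n - j)) • X ^ (n - k)) ↔
      (∀ n k : ℕ, 1 ≤ k → k ≤ n →
        b n k = (∏ j ∈ Finset.range k, b (n - j) 1) /
            (∏ j ∈ Finset.Icc 1 k, b j 1) * b k k)) :=
  observation_2_1_general Q b hb hb1 hnorm
end

section
/- Define the ψ-product on F[x] by f *_ψ g := f(x̂_ψ)(g), extended from f *_ψ xⁿ = f(x̂_ψ) xⁿ. Then the Leibniz rule ∂_ψ(f *_ψ g) = (Df) *_ψ g + f *_ψ (∂_ψ g) holds for all polynomials f, g, where D is the ordinary derivative. -/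
open Polynomial

/-- for the ψ-product f *_ψ g = f(x̂_ψ)(g), the Leibniz rule
∂_ψ(f *_ψ g) = (Df) *_ψ g + f *_ψ (∂_ψ g) holds. -/
theorem psi_product_Leibniz {F : Type*} [Field F] [CharZero F]
    (nψ : ℕ → F) (hn0 : nψ 0 = 0) (hn : ∀ n ≥ 1, nψ n ≠ 0)
    (D M : Module.End F (Polynomial F))
    (hD : ∀ n : ℕ, D (X ^ n) = nψ n • X ^ (n - 1))
    (hM : ∀ n : ℕ, M (X ^ n) = ((n + 1 : F) / nψ (n + 1)) • X ^ (n + 1)) :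
    ∀ f g : Polynomial F,
      D ((Polynomial.aeval M f) g) =
        (Polynomial.aeval M (derivative f)) g + (Polynomial.aeval M f) (D g) := by
  -- commutator [D, M] = id, first on monomials
  have key : ∀ n : ℕ, D (M (X ^ n : Polynomial F)) = M (D (X ^ n : Polynomial F)) + X ^ n := by
    intro n
    rw [hM n, map_smul, hD (n+1), Nat.add_sub_cancel, smul_smul,
      div_mul_cancel₀ _ (hn (n+1) (by omega)), hD n]
    cases n with
    | zero => simp [hn0]
    | succ m =>
      rw [Nat.add_sub_cancel, map_smul, hM m, smul_smul,
        mul_div_cancel₀ _ (hn (m+1) (by omega))]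
      push_cast
      module
  have comm : ∀ p : Polynomial F, D (M p) = M (D p) + p := by
    intro p
    induction p using Polynomial.induction_on' with
    | add p q hp hq => simp only [map_add, hp, hq]; ring
    | monomial n a =>
      have hmono : (monomial n a : Polynomial F) = a • X ^ n := by
        rw [smul_eq_C_mul, C_mul_X_pow_eq_monomial]
      rw [hmono, map_smul, map_smul, map_smul, map_smul, key n, smul_add]
  -- power rule
  have powrule : ∀ k : ℕ, ∀ g : Polynomial F,
      D ((M ^ (k+1)) g) = ((k:F)+1) • ((M ^ k) g) + (M ^ (k+1)) (D g) := by
    intro k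
    induction k with
    | zero => intro g; simpa [comm g] using by ring_nf
    | succ m ih =>
      intro g
      have h0 : ∀ p : Polynomial F, (M ^ (m+2)) p = M ((M ^ (m+1)) p) := by
        intro p; rw [pow_succ', Module.End.mul_apply]
      have h1 : ∀ p : Polynomial F, (M ^ (m+1)) p = M ((M ^ m) p) := by
        intro p; rw [pow_succ', Module.End.mul_apply]
      rw [h0 g, comm, ih, map_add, map_smul, ← h1, ← h0,
        show m+1+1 = m+2 from rfl]
      push_cast
      module
  intro f
  induction f using Polynomial.induction_on with
  | C a =>
    intro g
    simp [map_smul, Algebra.algebraMap_eq_smul_one]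
  | add p q hp hq =>
    intro g
    simp only [map_add, LinearMap.add_apply, hp g, hq g]
    ring
  | monomial n a ih =>
    intro g
    have hd : derivative (C a * X ^ (n+1)) = C (a * ((n:F)+1)) * X ^ n := by
      rw [derivative_C_mul, derivative_X_pow]
      push_cast
      rw [C_mul]
      ring
    rw [hd]
    simp only [map_mul, aeval_C, aeval_X, map_pow, Algebra.algebraMap_eq_smul_one,
      Module.End.mul_apply, LinearMap.smul_apply, Module.End.one_apply]
    rw [map_smul, powrule n g, smul_add, smul_smul]
end
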